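/- The matrix M has at least one real eigenvalue, and if λ_max denotes the largest real eigenvalue of M, then every global minimizer y of f (i.e. every y with f(y) ≤ f(z) for all z ∈ ℝⁿ) satisfies ‖y‖² = λ_max. -/

import Mathlib

open Matrix

noncomputable def Mmat {n : ℕ} (D b : Fin n → ℝ) :
    Matrix (Fin n ⊕ Fin n ⊕ Unit) (Fin n ⊕ Fin n ⊕ Unit) ℝ :=
  Matrix.of fun i j =>
    match i, j with
    | Sum.inl i, Sum.inl j => if i = j then D i else 0
    | Sum.inl i, Sum.inr (Sum.inl j) => if i = j then -b i else 0
    | Sum.inl _, Sum.inr (Sum.inr _) => 0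
    | Sum.inr (Sum.inl _), Sum.inl _ => 0
    | Sum.inr (Sum.inl i), Sum.inr (Sum.inl j) => if i = j then D i else 0
    | Sum.inr (Sum.inl i), Sum.inr (Sum.inr _) => -b i
    | Sum.inr (Sum.inr _), Sum.inl _ => 1
    | Sum.inr (Sum.inr _), Sum.inr _ => 0

/-- `f(y) = (1/4)‖y‖⁴ − (1/2) yᵀ D y + bᵀ y`. -/
noncomputable def fD {n : ℕ} (D b : Fin n → ℝ) (y : Fin n → ℝ) : ℝ :=
  (1/4) * (y ⬝ᵥ y)^2 - (1/2) * (y ⬝ᵥ (Matrix.diagonal D *ᵥ y)) + b ⬝ᵥ y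

/-!
At a stationary point `y` of `f`, the vector `(y_i², y_i, 1)` is an eigenvector of `M` with
eigenvalue `‖y‖²`. Conversely, an eigenvector `(u, w, t)` with `t ≠ 0` whose eigenvalue `μ` is not
a diagonal entry of `D` yields the stationary point `w / t` with `‖w / t‖² = μ`; every other
eigenvalue is some `D_i` for which the second-order condition at a global minimizer `y`, tested
in a direction of the `D_i`-eigenspace orthogonal to `y`, gives `D_i ≤ ‖y‖²`. For two stationary
points, `f z - f y = -(‖z‖² - ‖y‖²) ‖z - y‖² / 4`, so a global minimizer has the largest squared
norm among all stationary points. As `f` is coercive, a minimizer exists, and its squared norm is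
the largest real eigenvalue.
-/

open Filter Topology

lemma nonneg_of_forall_pos_nonneg_pow_mul {k : ℕ} {a : ℝ} {p : ℝ → ℝ} (hp : ContinuousAt p 0)
    (h : ∀ t > 0, 0 ≤ t ^ k * (a + t * p t)) : 0 ≤ a := by
  have hlim : Tendsto (fun t => a + t * p t) (𝓝[>] 0) (𝓝 a) := by
    have : ContinuousAt (fun t => a + t * p t) 0 := by fun_prop
    simpa using this.tendsto.mono_left nhdsWithin_le_nhds
  refine ge_of_tendsto hlim (eventually_nhdsWithin_of_forall fun t ht => ?_)
  exact (mul_nonneg_iff_of_pos_left (pow_pos ht k)).mp (h t ht)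

lemma sq_norm_le_dotProduct_self {ι : Type*} [Fintype ι] (y : ι → ℝ) : ‖y‖ ^ 2 ≤ y ⬝ᵥ y := by
  refine (Real.le_sqrt (norm_nonneg y) (dotProduct_self_star_nonneg y)).mp
    ((pi_norm_le_iff_of_nonneg (Real.sqrt_nonneg _)).mpr fun i => Real.abs_le_sqrt ?_)
  rw [sq]
  exact Finset.single_le_sum (fun j _ => mul_self_nonneg (y j)) (Finset.mem_univ i)

lemma dotProduct_diagonal_mulVec_comm {ι R : Type*} [Fintype ι] [DecidableEq ι] [CommSemiring R]
    (d x y : ι → R) : x ⬝ᵥ (diagonal d *ᵥ y) = y ⬝ᵥ (diagonal d *ᵥ x) := by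
  rw [dotProduct_mulVec, ← mulVec_transpose, diagonal_transpose, dotProduct_comm]

section Stationary

variable {n : ℕ} (D b : Fin n → ℝ)

def IsStationaryPoint (y : Fin n → ℝ) : Prop :=
  (y ⬝ᵥ y) • y - diagonal D *ᵥ y + b = 0

variable {D b} in
lemma isStationaryPoint_iff {y : Fin n → ℝ} :
    IsStationaryPoint D b y ↔ ∀ i, (y ⬝ᵥ y) * y i - D i * y i + b i = 0 := by
  simp [IsStationaryPoint, funext_iff, mulVec_diagonal]

lemma fD_add_smul (y h : Fin n → ℝ) (t : ℝ) :
    fD D b (y + t • h) = fD D b y + t * (((y ⬝ᵥ y) • y - diagonal D *ᵥ y + b) ⬝ᵥ h)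
      + t ^ 2 * ((y ⬝ᵥ h) ^ 2 + ((y ⬝ᵥ y) * (h ⬝ᵥ h) - h ⬝ᵥ (diagonal D *ᵥ h)) / 2)
      + t ^ 3 * ((y ⬝ᵥ h) * (h ⬝ᵥ h)) + t ^ 4 * ((h ⬝ᵥ h) ^ 2 / 4) := by
  simp only [fD, add_dotProduct, dotProduct_add, smul_dotProduct, dotProduct_smul, sub_dotProduct,
    mulVec_add, mulVec_smul, smul_eq_mul]
  rw [dotProduct_comm h y, dotProduct_comm (diagonal D *ᵥ y) h,
    ← dotProduct_diagonal_mulVec_comm D y h]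
  ring

lemma dotProduct_self_sub_le_fD (y : Fin n → ℝ) :
    y ⬝ᵥ y - ((∑ i, |D i| + 3) ^ 2 / 4 + b ⬝ᵥ b / 2) ≤ fD D b y := by
  set K := ∑ i, |D i|
  have hDy : y ⬝ᵥ (diagonal D *ᵥ y) ≤ K * (y ⬝ᵥ y) := by
    simp only [dotProduct, mulVec_diagonal, Finset.mul_sum]
    refine Finset.sum_le_sum fun i _ => ?_
    have hDi : D i ≤ K := (le_abs_self (D i)).trans
      (Finset.single_le_sum (fun j _ => abs_nonneg (D j)) (Finset.mem_univ i))
    nlinarith [mul_self_nonneg (y i)]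
  have hby : -(b ⬝ᵥ b + y ⬝ᵥ y) / 2 ≤ b ⬝ᵥ y := by
    have := dotProduct_self_star_nonneg (b + y)
    simp only [star_trivial, add_dotProduct, dotProduct_add, dotProduct_comm y b] at this
    linarith
  unfold fD
  nlinarith [sq_nonneg (y ⬝ᵥ y / 2 - (K + 3) / 2)]

lemma exists_forall_fD_le : ∃ y, ∀ z, fD D b y ≤ fD D b z := by
  have hcont : Continuous (fD D b) := by unfold fD; fun_prop
  refine hcont.exists_forall_le (tendsto_atTop_mono (fun y => ?_) (tendsto_atTop_add_const_right _
    (-((∑ i, |D i| + 3) ^ 2 / 4 + b ⬝ᵥ b / 2))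
    ((tendsto_pow_atTop two_ne_zero).comp tendsto_norm_cocompact_atTop)))
  simp only [Function.comp_apply]
  linarith [sq_norm_le_dotProduct_self y, dotProduct_self_sub_le_fD D b y]

variable {D b} {y : Fin n → ℝ}

lemma fD_add_of_isStationaryPoint (hy : IsStationaryPoint D b y) (h : Fin n → ℝ) :
    fD D b (y + h) = fD D b y + ((y + h) ⬝ᵥ (y + h) - y ⬝ᵥ y) ^ 2 / 4
      + ((y ⬝ᵥ y) * (h ⬝ᵥ h) - h ⬝ᵥ (diagonal D *ᵥ h)) / 2 := by
  unfold IsStationaryPoint at hy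
  have := fD_add_smul D b y h 1
  rw [one_smul, hy, zero_dotProduct] at this
  rw [this]
  simp only [add_dotProduct, dotProduct_add, dotProduct_comm h y]
  ring

lemma IsStationaryPoint.fD_sub_fD {z : Fin n → ℝ} (hy : IsStationaryPoint D b y)
    (hz : IsStationaryPoint D b z) :
    fD D b z - fD D b y = -((z ⬝ᵥ z - y ⬝ᵥ y) * ((z - y) ⬝ᵥ (z - y))) / 4 := by
  have hyz := fD_add_of_isStationaryPoint hy (z - y)
  have hzy := fD_add_of_isStationaryPoint hz (y - z)
  rw [add_sub_cancel] at hyz hzy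
  rw [← neg_sub z y, neg_dotProduct, dotProduct_neg, mulVec_neg, neg_dotProduct,
    dotProduct_neg, neg_neg, neg_neg] at hzy
  linear_combination (hyz - hzy) / 2

lemma isStationaryPoint_of_forall_fD_le (hmin : ∀ z, fD D b y ≤ fD D b z) :
    IsStationaryPoint D b y := by
  set g := (y ⬝ᵥ y) • y - diagonal D *ᵥ y + b
  have hg : 0 ≤ -(g ⬝ᵥ g) := by
    refine nonneg_of_forall_pos_nonneg_pow_mul (k := 1)
      (p := fun t => ((y ⬝ᵥ g) ^ 2 + ((y ⬝ᵥ y) * (g ⬝ᵥ g) - g ⬝ᵥ (diagonal D *ᵥ g)) / 2)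
        - t * ((y ⬝ᵥ g) * (g ⬝ᵥ g)) + t ^ 2 * ((g ⬝ᵥ g) ^ 2 / 4)) (by fun_prop) fun t _ => ?_
    have := hmin (y + (-t) • g)
    rw [fD_add_smul] at this
    linear_combination this
  exact dotProduct_self_eq_zero.mp (le_antisymm (by linarith) (dotProduct_self_star_nonneg g))

end Stationary

section Minimizer

variable {n : ℕ} {D b : Fin n → ℝ} {y : Fin n → ℝ} (hmin : ∀ z, fD D b y ≤ fD D b z)
include hmin

lemma dotProduct_self_le_of_isStationaryPoint {z : Fin n → ℝ} (hz : IsStationaryPoint D b z) :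
    z ⬝ᵥ z ≤ y ⬝ᵥ y := by
  have hdiff := (isStationaryPoint_of_forall_fD_le hmin).fD_sub_fD hz
  by_contra! hlt
  have hzy : (z - y) ⬝ᵥ (z - y) ≤ 0 := by nlinarith [hmin z]
  obtain rfl : z = y :=
    sub_eq_zero.mp (dotProduct_self_eq_zero.mp (hzy.antisymm (dotProduct_self_star_nonneg _)))
  exact hlt.false

lemma dotProduct_diagonal_mulVec_le_of_forall_fD_le {h : Fin n → ℝ} (hyh : y ⬝ᵥ h = 0) :
    h ⬝ᵥ (diagonal D *ᵥ h) ≤ (y ⬝ᵥ y) * (h ⬝ᵥ h) := by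
  have hy := isStationaryPoint_of_forall_fD_le hmin
  unfold IsStationaryPoint at hy
  have := nonneg_of_forall_pos_nonneg_pow_mul (k := 2)
    (a := ((y ⬝ᵥ y) * (h ⬝ᵥ h) - h ⬝ᵥ (diagonal D *ᵥ h)) / 2) (p := fun t => t * ((h ⬝ᵥ h) ^ 2 / 4))
    (by fun_prop) fun t _ => by
      have := hmin (y + t • h)
      rw [fD_add_smul, hy, hyh, zero_dotProduct] at this
      linear_combination this
  linarith

lemma le_dotProduct_self_of_apply_eq_zero {i : Fin n} (hyi : y i = 0) : D i ≤ y ⬝ᵥ y := by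
  simpa [diagonal_mulVec_single] using
    dotProduct_diagonal_mulVec_le_of_forall_fD_le hmin (h := Pi.single i 1) (by simp [hyi])

lemma le_dotProduct_self_of_b_apply_eq_zero {i : Fin n} (hbi : b i = 0) : D i ≤ y ⬝ᵥ y := by
  have hy := isStationaryPoint_iff.mp (isStationaryPoint_of_forall_fD_le hmin) i
  rcases mul_eq_zero.mp (show (y ⬝ᵥ y - D i) * y i = 0 by linear_combination hy - hbi) with h | h
  · linarith
  · exact le_dotProduct_self_of_apply_eq_zero hmin h

lemma le_dotProduct_self_of_eq {i j : Fin n} (hij : i ≠ j) (hD : D i = D j) : D i ≤ y ⬝ᵥ y := by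
  by_cases hyi : y i = 0
  · exact le_dotProduct_self_of_apply_eq_zero hmin hyi
  have := dotProduct_diagonal_mulVec_le_of_forall_fD_le hmin
    (h := Pi.single i (y j) - Pi.single j (y i)) (by simp [mul_comm])
  simp [mulVec_sub, hij, hij.symm, hD] at this
  nlinarith [pow_pos (sq_pos_of_ne_zero hyi) 1, sq_nonneg (y j)]

lemma le_dotProduct_self_of_sum_eq_zero {u : Fin n → ℝ} {μ : ℝ} (hu : u ≠ 0)
    (hsum : ∑ i, u i = 0) (hD : ∀ i, D i * u i = μ * u i) : μ ≤ y ⬝ᵥ y := by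
  obtain ⟨i, hi⟩ := Function.ne_iff.mp hu
  obtain ⟨j, hji, hj⟩ : ∃ j ≠ i, u j ≠ 0 := by
    by_contra! h
    exact hi (by rwa [Finset.sum_eq_single i (fun j _ => h j) (by simp)] at hsum)
  have hDi : D i = μ := mul_right_cancel₀ hi (hD i)
  have hDj : D j = μ := mul_right_cancel₀ hj (hD j)
  exact hDi ▸ le_dotProduct_self_of_eq hmin hji.symm (hDi.trans hDj.symm)

end Minimizer

section Eigenvectors

variable {n : ℕ} {D b : Fin n → ℝ}

variable (D b) in
lemma Mmat_mulVec_sumElim (u w : Fin n → ℝ) (t : ℝ) :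
    Mmat D b *ᵥ Sum.elim u (Sum.elim w fun _ => t)
      = Sum.elim (fun i => D i * u i - b i * w i)
          (Sum.elim (fun i => D i * w i - b i * t) fun _ => ∑ i, u i) := by
  ext (i | i | _) <;> simp [Mmat, mulVec, dotProduct, Fintype.sum_sum_type, ite_mul, sub_eq_add_neg]

lemma Mmat_mulVec_eq_smul_iff {u w : Fin n → ℝ} {t μ : ℝ} :
    Mmat D b *ᵥ Sum.elim u (Sum.elim w fun _ => t) = μ • Sum.elim u (Sum.elim w fun _ => t) ↔
      (∀ i, D i * u i - b i * w i = μ * u i) ∧ (∀ i, D i * w i - b i * t = μ * w i) ∧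
        ∑ i, u i = μ * t := by
  simp [Mmat_mulVec_sumElim, funext_iff, Sum.forall]

lemma IsStationaryPoint.exists_Mmat_mulVec_eq_smul {y : Fin n → ℝ}
    (hy : IsStationaryPoint D b y) : ∃ v, v ≠ 0 ∧ Mmat D b *ᵥ v = (y ⬝ᵥ y) • v := by
  refine ⟨Sum.elim (fun i => y i * y i) (Sum.elim y fun _ => 1), fun h => ?_,
    Mmat_mulVec_eq_smul_iff.mpr ⟨fun i => ?_, fun i => ?_, by simp [dotProduct]⟩⟩
  · simpa using congrFun h (Sum.inr (Sum.inr ()))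
  · linear_combination -y i * isStationaryPoint_iff.mp hy i
  · linear_combination -isStationaryPoint_iff.mp hy i

lemma isStationaryPoint_of_Mmat_mulVec_eq_smul {u w : Fin n → ℝ} {t μ : ℝ} (ht : t ≠ 0)
    (hD : ∀ i, D i ≠ μ) (hMv : Mmat D b *ᵥ Sum.elim u (Sum.elim w fun _ => t)
      = μ • Sum.elim u (Sum.elim w fun _ => t)) :
    IsStationaryPoint D b (t⁻¹ • w) ∧ (t⁻¹ • w) ⬝ᵥ (t⁻¹ • w) = μ := by
  obtain ⟨hu, hw, hsum⟩ := Mmat_mulVec_eq_smul_iff.mp hMv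
  have hu' : ∀ i, u i = t * (t⁻¹ * w i) ^ 2 := fun i => by
    refine mul_left_cancel₀ (mul_ne_zero (sub_ne_zero.mpr (hD i)) ht) ?_
    field_simp
    linear_combination t * hu i - w i * hw i
  have hnorm : (t⁻¹ • w) ⬝ᵥ (t⁻¹ • w) = μ := by
    refine mul_left_cancel₀ ht ?_
    simp only [dotProduct, Pi.smul_apply, smul_eq_mul, Finset.mul_sum, ← sq, ← hu', hsum]
    ring
  refine ⟨isStationaryPoint_iff.mpr fun i => ?_, hnorm⟩
  rw [hnorm, Pi.smul_apply, smul_eq_mul]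
  field_simp
  linear_combination -hw i

lemma eigenvalue_le_dotProduct_self {y : Fin n → ℝ} (hmin : ∀ z, fD D b y ≤ fD D b z)
    {v : Fin n ⊕ Fin n ⊕ Unit → ℝ} {μ : ℝ} (hv : v ≠ 0) (hMv : Mmat D b *ᵥ v = μ • v) :
    μ ≤ y ⬝ᵥ y := by
  obtain ⟨u, w, t, rfl⟩ : ∃ u w t, v = Sum.elim u (Sum.elim w fun _ : Unit => t) :=
    ⟨_, _, v (Sum.inr (Sum.inr ())), by ext (i | i | ⟨⟩) <;> rfl⟩
  obtain ⟨hu, hw, hsum⟩ := Mmat_mulVec_eq_smul_iff.mp hMv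
  by_cases hb : ∃ i, D i = μ ∧ b i = 0
  · obtain ⟨i, rfl, hbi⟩ := hb
    exact le_dotProduct_self_of_b_apply_eq_zero hmin hbi
  push Not at hb
  by_cases ht : t = 0
  · subst ht
    obtain rfl : w = 0 := funext fun i => by
      by_contra hwi
      have hDi : D i = μ := mul_right_cancel₀ hwi (by linear_combination hw i)
      exact hb i hDi (mul_right_cancel₀ hwi (by linear_combination u i * hDi - hu i))
    refine le_dotProduct_self_of_sum_eq_zero hmin (fun hu0 => hv ?_) (by simpa using hsum)
      fun i => by simpa using hu i
    subst hu0
    ext (i | i | _) <;> rfl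
  · have hD : ∀ i, D i ≠ μ := fun i hDi =>
      hb i hDi (mul_right_cancel₀ ht (by linear_combination w i * hDi - hw i))
    obtain ⟨hz, hzμ⟩ := isStationaryPoint_of_Mmat_mulVec_eq_smul ht hD hMv
    exact hzμ ▸ dotProduct_self_le_of_isStationaryPoint hmin hz

end Eigenvectors

theorem stmt9_general {n : ℕ} (D b : Fin n → ℝ) :
    ∃ lmax : ℝ,
      (∃ v : Fin n ⊕ Fin n ⊕ Unit → ℝ, v ≠ 0 ∧ Mmat D b *ᵥ v = lmax • v) ∧
      (∀ mu : ℝ,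
        (∃ v : Fin n ⊕ Fin n ⊕ Unit → ℝ, v ≠ 0 ∧ Mmat D b *ᵥ v = mu • v) → mu ≤ lmax) ∧
      ∀ y : Fin n → ℝ, (∀ z : Fin n → ℝ, fD D b y ≤ fD D b z) → y ⬝ᵥ y = lmax := by
  obtain ⟨y₀, hy₀⟩ := exists_forall_fD_le D b
  have hmax : ∀ y, (∀ z, fD D b y ≤ fD D b z) → ∀ mu : ℝ,
      (∃ v : Fin n ⊕ Fin n ⊕ Unit → ℝ, v ≠ 0 ∧ Mmat D b *ᵥ v = mu • v) → mu ≤ y ⬝ᵥ y :=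
    fun y hy _ ⟨_, hv, hMv⟩ => eigenvalue_le_dotProduct_self hy hv hMv
  refine ⟨y₀ ⬝ᵥ y₀, (isStationaryPoint_of_forall_fD_le hy₀).exists_Mmat_mulVec_eq_smul,
    hmax y₀ hy₀, fun y hy => le_antisymm ?_ ?_⟩
  · exact hmax y₀ hy₀ _ (isStationaryPoint_of_forall_fD_le hy).exists_Mmat_mulVec_eq_smul
  · exact hmax y hy _ (isStationaryPoint_of_forall_fD_le hy₀).exists_Mmat_mulVec_eq_smul

theorem stmt9 {n : ℕ} (hn : 0 < n) (D b : Fin n → ℝ) (hD : Antitone D) :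
    ∃ lmax : ℝ,
      (∃ v : Fin n ⊕ Fin n ⊕ Unit → ℝ, v ≠ 0 ∧ Mmat D b *ᵥ v = lmax • v) ∧
      (∀ mu : ℝ,
        (∃ v : Fin n ⊕ Fin n ⊕ Unit → ℝ, v ≠ 0 ∧ Mmat D b *ᵥ v = mu • v) → mu ≤ lmax) ∧
      ∀ y : Fin n → ℝ, (∀ z : Fin n → ℝ, fD D b y ≤ fD D b z) → y ⬝ᵥ y = lmax :=
  stmt9_general D b
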